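/- arXiv:2510.20608 — 3 statements merged into one kernel-verified Lean document; each statement's English description precedes it below -/
import Mathlib

section
/- Let g(x) = (1/n)∑ᵢ vᵢ ∇fᵢ(x) with random weights satisfying E[vᵢ²] = 1/pᵢ and E[vᵢvⱼ] = 1 for i ≠ j (independent sampling). Then E‖g(x)‖² = ‖∇f(x)‖² + (1/n²)∑ᵢ (1/pᵢ − 1)‖∇fᵢ(x)‖². -/
open MeasureTheory ProbabilityTheory
open scoped InnerProductSpace

/-! Expanding the square, `E‖∑ vᵢ aᵢ‖² = ∑ᵢⱼ E[vᵢvⱼ] ⟪aᵢ, aⱼ⟫`. Writing `E[vᵢvⱼ] = 1 + δᵢⱼ (1/pᵢ - 1)`,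
the all-ones part reassembles to `‖∑ aᵢ‖²` and the diagonal part gives the variance term. -/

section

variable {ι E : Type*} [Fintype ι] [NormedAddCommGroup E] [InnerProductSpace ℝ E]

theorem norm_sum_smul_sq (c : ι → ℝ) (a : ι → E) :
    ‖∑ i, c i • a i‖ ^ 2 = ∑ i, ∑ j, c i * c j * ⟪a i, a j⟫_ℝ := by
  rw [← real_inner_self_eq_norm_sq, sum_inner]
  simp_rw [inner_sum, real_inner_smul_left, real_inner_smul_right, ← mul_assoc]

theorem integral_norm_sum_smul_sq {Ω : Type*} [MeasurableSpace Ω] {μ : Measure Ω}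
    {v : ι → Ω → ℝ} (hv : ∀ i, MemLp (v i) 2 μ) (a : ι → E) :
    ∫ ω, ‖∑ i, v i ω • a i‖ ^ 2 ∂μ =
      ∑ i, ∑ j, (∫ ω, v i ω * v j ω ∂μ) * ⟪a i, a j⟫_ℝ := by
  have hint : ∀ i j, Integrable (fun ω ↦ v i ω * v j ω * ⟪a i, a j⟫_ℝ) μ :=
    fun i j ↦ ((hv i).integrable_mul (hv j)).mul_const _
  simp_rw [norm_sum_smul_sq]
  rw [integral_finsetSum _ fun i _ ↦ integrable_finsetSum _ fun j _ ↦ hint i j]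
  refine Finset.sum_congr rfl fun i _ ↦ ?_
  rw [integral_finsetSum _ fun j _ ↦ hint i j]
  exact Finset.sum_congr rfl fun j _ ↦ integral_mul_const _ _

theorem sum_sum_mul_inner_eq_of_offDiag_eq_one {m : ι → ι → ℝ} {c : ι → ℝ}
    (hdiag : ∀ i, m i i = 1 + c i) (hoff : ∀ i j, i ≠ j → m i j = 1) (a : ι → E) :
    ∑ i, ∑ j, m i j * ⟪a i, a j⟫_ℝ = ‖∑ i, a i‖ ^ 2 + ∑ i, c i * ‖a i‖ ^ 2 := by
  classical
  have hm : ∀ i j, m i j * ⟪a i, a j⟫_ℝ =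
      ⟪a i, a j⟫_ℝ + if j = i then c i * ‖a i‖ ^ 2 else 0 := by
    intro i j
    rcases eq_or_ne j i with rfl | hji
    · rw [hdiag, real_inner_self_eq_norm_sq, if_pos rfl]
      ring
    · rw [hoff i j hji.symm, if_neg hji, one_mul, add_zero]
  have hsum := norm_sum_smul_sq (fun _ ↦ (1 : ℝ)) a
  simp only [one_smul, mul_one, one_mul] at hsum
  simp_rw [hm, Finset.sum_add_distrib, Finset.sum_ite_eq', Finset.mem_univ, if_true, hsum]

end

theorem norm_inv_natCast_smul_sq {E : Type*} [NormedAddCommGroup E] [NormedSpace ℝ E]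
    (n : ℕ) (y : E) : ‖(n : ℝ)⁻¹ • y‖ ^ 2 = ((n : ℝ) ^ 2)⁻¹ * ‖y‖ ^ 2 := by
  rw [norm_smul, mul_pow, Real.norm_eq_abs, sq_abs, inv_pow]

theorem second_moment_independent_sampling_general {Ω : Type*} [MeasureSpace Ω]
    {d : ℕ}
    (n : ℕ)
    (p : Fin n → ℝ)
    (f : Fin n → EuclideanSpace ℝ (Fin d) → ℝ)
    (v : Fin n → Ω → ℝ)
    (hv2 : ∀ i, MemLp (v i) 2 ℙ)
    (hsq : ∀ i, ∫ ω, (v i ω) ^ 2 = 1 / p i)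
    (hcross : ∀ i j, i ≠ j → ∫ ω, v i ω * v j ω = 1)
    (x : EuclideanSpace ℝ (Fin d)) :
    ∫ ω, ‖(n : ℝ)⁻¹ • ∑ i, v i ω • gradient (f i) x‖ ^ 2 =
      ‖(n : ℝ)⁻¹ • ∑ i, gradient (f i) x‖ ^ 2 +
        ((n : ℝ) ^ 2)⁻¹ * ∑ i, (1 / p i - 1) * ‖gradient (f i) x‖ ^ 2 := by
  have hdiag : ∀ i, ∫ ω, v i ω * v i ω = 1 + (1 / p i - 1) := fun i ↦ by
    simp_rw [← sq, hsq]
    ring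
  simp_rw [norm_inv_natCast_smul_sq]
  rw [integral_const_mul, integral_norm_sum_smul_sq hv2,
    sum_sum_mul_inner_eq_of_offDiag_eq_one hdiag hcross, mul_add]

theorem second_moment_independent_sampling {Ω : Type*} [MeasureSpace Ω]
    [IsProbabilityMeasure (ℙ : Measure Ω)] {d : ℕ}
    (n : ℕ) (hn : 0 < n)
    (p : Fin n → ℝ) (hp : ∀ i, 0 < p i) (hp1 : ∀ i, p i ≤ 1)
    (f : Fin n → EuclideanSpace ℝ (Fin d) → ℝ)
    (hdiff : ∀ i x, DifferentiableAt ℝ (f i) x)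
    (v : Fin n → Ω → ℝ)
    (hv2 : ∀ i, MemLp (v i) 2 ℙ)
    (hmean : ∀ i, ∫ ω, v i ω = 1)
    (hsq : ∀ i, ∫ ω, (v i ω) ^ 2 = 1 / p i)
    (hcross : ∀ i j, i ≠ j → ∫ ω, v i ω * v j ω = 1)
    (x : EuclideanSpace ℝ (Fin d)) :
    ∫ ω, ‖(n : ℝ)⁻¹ • ∑ i, v i ω • gradient (f i) x‖ ^ 2 =
      ‖(n : ℝ)⁻¹ • ∑ i, gradient (f i) x‖ ^ 2 +
        ((n : ℝ) ^ 2)⁻¹ * ∑ i, (1 / p i - 1) * ‖gradient (f i) x‖ ^ 2 :=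
  second_moment_independent_sampling_general n p f v hv2 hsq hcross x
end

section
/- Under independent sampling without replacement (inclusion probabilities pᵢ), the ES condition holds with A = maxᵢ (1−pᵢ)Lᵢ/(pᵢ n), B = 1, C = 2AΔ. -/
/-!
With independent inclusions the weights `wᵢ = 1{i ∈ S} / pᵢ` satisfy `E[wᵢ wⱼ] = 1` for `i ≠ j`
and `E[wᵢ²] = 1 / pᵢ`, so
`E‖(1/n) ∑ wᵢ ∇fᵢ(x)‖² = ‖∇f(x)‖² + (1/n²) ∑ (1/pᵢ - 1) ‖∇fᵢ(x)‖²`.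
A gradient step of length `1/Lᵢ` from `x` shows `‖∇fᵢ(x)‖² ≤ 2 Lᵢ (fᵢ(x) - fᵢ^inf)`, and
`(1/n) ∑ (fᵢ(x) - fᵢ^inf) = (f(x) - f⋆) + Δ`.
-/

open MeasureTheory ProbabilityTheory
open scoped RealInnerProductSpace

section Smooth

variable {E : Type*} [NormedAddCommGroup E] [InnerProductSpace ℝ E] [CompleteSpace E]
  {f : E → ℝ} {L : ℝ}

theorem HasGradientAt.hasDerivAt_comp_add_smul {g x u : E} {t : ℝ}
    (h : HasGradientAt f g (x + t • u)) :
    HasDerivAt (fun s : ℝ => f (x + s • u)) ⟪g, u⟫ t := by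
  have hline : HasDerivAt (fun s : ℝ => x + s • u) u t := by
    simpa using ((hasDerivAt_id t).smul_const u).const_add x
  have hcomp := h.hasFDerivAt.comp_hasDerivAt t hline
  simp only [InnerProductSpace.toDual_apply_apply] at hcomp
  exact hcomp

theorem HasGradientAt.sum {ι : Type*} (s : Finset ι) {f : ι → E → ℝ} {g : ι → E} {x : E}
    (h : ∀ i ∈ s, HasGradientAt (f i) (g i) x) :
    HasGradientAt (fun y => ∑ i ∈ s, f i y) (∑ i ∈ s, g i) x := by
  rw [hasGradientAt_iff_hasFDerivAt, map_sum]
  exact HasFDerivAt.fun_sum fun i hi => (h i hi).hasFDerivAt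

theorem HasGradientAt.const_mul {g x : E} (c : ℝ) (h : HasGradientAt f g x) :
    HasGradientAt (fun y => c * f y) (c • g) x := by
  rw [hasGradientAt_iff_hasFDerivAt, map_smul]
  exact h.hasFDerivAt.const_mul c

theorem le_add_inner_gradient_add_of_lipschitz (hf : ∀ x, DifferentiableAt ℝ f x)
    (hlip : ∀ x y, ‖gradient f x - gradient f y‖ ≤ L * ‖x - y‖) (x u : E) :
    f (x + u) ≤ f x + ⟪gradient f x, u⟫ + L / 2 * ‖u‖ ^ 2 := by
  set φ : ℝ → ℝ := fun t => f (x + t • u) - t * ⟪gradient f x, u⟫ - L / 2 * t ^ 2 * ‖u‖ ^ 2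
  have hφ : ∀ t, HasDerivAt φ
      (⟪gradient f (x + t • u) - gradient f x, u⟫ - L * t * ‖u‖ ^ 2) t := by
    intro t
    have hderiv := (((hf (x + t • u)).hasGradientAt.hasDerivAt_comp_add_smul).sub
      ((hasDerivAt_id t).mul_const ⟪gradient f x, u⟫)).sub
      (((hasDerivAt_pow 2 t).const_mul (L / 2)).mul_const (‖u‖ ^ 2))
    refine hderiv.congr_deriv ?_
    rw [inner_sub_left]
    simp only [one_mul, Nat.cast_ofNat, Nat.add_one_sub_one, pow_one]
    ring
  have hslope : ∀ t ∈ interior (Set.Icc (0 : ℝ) 1), deriv φ t ≤ 0 := by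
    intro t ht
    rw [interior_Icc] at ht
    rw [(hφ t).deriv, sub_nonpos]
    calc ⟪gradient f (x + t • u) - gradient f x, u⟫
        ≤ ‖gradient f (x + t • u) - gradient f x‖ * ‖u‖ := real_inner_le_norm _ _
      _ ≤ L * ‖t • u‖ * ‖u‖ := by gcongr; simpa using hlip (x + t • u) x
      _ = L * t * ‖u‖ ^ 2 := by rw [norm_smul, Real.norm_of_nonneg ht.1.le]; ring
  have hφ01 := antitoneOn_of_deriv_nonpos (convex_Icc 0 1)
    (fun t _ => (hφ t).continuousAt.continuousWithinAt)
    (fun t _ => (hφ t).differentiableAt.differentiableWithinAt) hslope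
    (Set.left_mem_Icc.2 zero_le_one) (Set.right_mem_Icc.2 zero_le_one) zero_le_one
  simp only [φ, one_smul, zero_smul, add_zero, one_pow, one_mul, zero_mul, sub_zero, mul_zero,
    ne_eq, OfNat.ofNat_ne_zero, not_false_eq_true, zero_pow] at hφ01
  linarith

theorem norm_sq_gradient_le_of_lipschitz (hL : 0 < L) (hf : ∀ x, DifferentiableAt ℝ f x)
    (hlip : ∀ x y, ‖gradient f x - gradient f y‖ ≤ L * ‖x - y‖) {m : ℝ} (hm : ∀ y, m ≤ f y)
    (x : E) : ‖gradient f x‖ ^ 2 ≤ 2 * L * (f x - m) := by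
  have hstep := le_add_inner_gradient_add_of_lipschitz hf hlip x (-L⁻¹ • gradient f x)
  rw [real_inner_smul_right, real_inner_self_eq_norm_sq, norm_smul, mul_pow, Real.norm_eq_abs,
    sq_abs] at hstep
  have hdescent : f (x + -L⁻¹ • gradient f x) ≤ f x - ‖gradient f x‖ ^ 2 / (2 * L) := by
    convert hstep using 1
    field_simp
    ring
  have hgap : ‖gradient f x‖ ^ 2 / (2 * L) ≤ f x - m := by
    linarith [hm (x + -L⁻¹ • gradient f x)]
  rwa [div_le_iff₀ (by positivity), mul_comm] at hgap

theorem inv_sub_one_mul_norm_sq_gradient_le (hL : 0 < L) (hf : ∀ x, DifferentiableAt ℝ f x)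
    (hlip : ∀ x y, ‖gradient f x - gradient f y‖ ≤ L * ‖x - y‖) {m : ℝ} (hm : ∀ y, m ≤ f y)
    {q : ℝ} (hq : 0 < q) (hq1 : q ≤ 1) (x : E) :
    (q⁻¹ - 1) * ‖gradient f x‖ ^ 2 ≤ 2 * ((1 - q) * L / q) * (f x - m) := by
  have hweight : 0 ≤ q⁻¹ - 1 := sub_nonneg.2 ((one_le_inv₀ hq).2 hq1)
  calc (q⁻¹ - 1) * ‖gradient f x‖ ^ 2 ≤ (q⁻¹ - 1) * (2 * L * (f x - m)) := by
        gcongr; exact norm_sq_gradient_le_of_lipschitz hL hf hlip hm x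
    _ = 2 * ((1 - q) * L / q) * (f x - m) := by field_simp

end Smooth

section Sampling

variable {Ω ι E : Type*} [MeasurableSpace Ω] {μ : Measure Ω}
  [NormedAddCommGroup E] [InnerProductSpace ℝ E]

theorem norm_sq_sum_smul [Fintype ι] (w : ι → ℝ) (a : ι → E) :
    ‖∑ i, w i • a i‖ ^ 2 = ∑ i, ∑ j, w i * w j * ⟪a i, a j⟫ := by
  simp only [← real_inner_self_eq_norm_sq, sum_inner, inner_sum, real_inner_smul_left,
    real_inner_smul_right, mul_assoc]
  exact Finset.sum_congr rfl fun i _ => Finset.sum_congr rfl fun j _ => by rw [real_inner_comm]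

theorem integral_norm_sq_sum_smul [Fintype ι] (w : ι → Ω → ℝ) (a : ι → E)
    (hw : ∀ i j, Integrable (fun ω => w i ω * w j ω) μ) :
    ∫ ω, ‖∑ i, w i ω • a i‖ ^ 2 ∂μ = ∑ i, ∑ j, (∫ ω, w i ω * w j ω ∂μ) * ⟪a i, a j⟫ := by
  simp_rw [norm_sq_sum_smul]
  rw [integral_finsetSum _ fun i _ => integrable_finsetSum _ fun j _ => (hw i j).mul_const _]
  refine Finset.sum_congr rfl fun i _ => ?_
  rw [integral_finsetSum _ fun j _ => (hw i j).mul_const _]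
  simp_rw [integral_mul_const]

theorem sum_sum_ite_mul_inner [Fintype ι] [DecidableEq ι] (c : ι → ℝ) (a : ι → E) :
    ∑ i, ∑ j, (if i = j then c i else 1) * ⟪a i, a j⟫
      = ‖∑ i, a i‖ ^ 2 + ∑ i, (c i - 1) * ‖a i‖ ^ 2 := by
  have hsplit : ∀ i j, (if i = j then c i else 1) * ⟪a i, a j⟫
      = ⟪a i, a j⟫ + if i = j then (c i - 1) * ⟪a i, a j⟫ else 0 := by
    intro i j
    split_ifs <;> ring
  simp_rw [hsplit, Finset.sum_add_distrib, Finset.sum_ite_eq, Finset.mem_univ, if_true,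
    real_inner_self_eq_norm_sq]
  rw [← real_inner_self_eq_norm_sq, sum_inner]
  simp_rw [inner_sum]

variable {S : ι → Set Ω} {p : ι → ℝ}

theorem integral_indicator_mul_indicator [DecidableEq ι] (hSm : ∀ i, MeasurableSet (S i))
    (hindep : Pairwise fun i j => IndepSet (S i) (S j) μ)
    (hS : ∀ i, μ (S i) = ENNReal.ofReal (p i)) (hp : ∀ i, 0 < p i) (i j : ι) :
    ∫ ω, (S i).indicator (fun _ => (p i)⁻¹) ω * (S j).indicator (fun _ => (p j)⁻¹) ω ∂μ
      = if i = j then (p i)⁻¹ else 1 := by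
  simp_rw [← Set.inter_indicator_mul]
  rw [integral_indicator_const _ ((hSm i).inter (hSm j)), smul_eq_mul]
  split_ifs with hij
  · subst hij
    rw [Set.inter_self, measureReal_def, hS, ENNReal.toReal_ofReal (hp i).le]
    field_simp [(hp i).ne']
  · rw [measureReal_def, (hindep hij).measure_inter_eq_mul, hS, hS, ENNReal.toReal_mul,
      ENNReal.toReal_ofReal (hp i).le, ENNReal.toReal_ofReal (hp j).le]
    field_simp [(hp i).ne', (hp j).ne']

theorem integral_norm_sq_sum_indicator_smul [Fintype ι] (hSm : ∀ i, MeasurableSet (S i))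
    (hindep : Pairwise fun i j => IndepSet (S i) (S j) μ)
    (hS : ∀ i, μ (S i) = ENNReal.ofReal (p i)) (hp : ∀ i, 0 < p i) (a : ι → E) :
    ∫ ω, ‖∑ i, (S i).indicator (fun _ => (p i)⁻¹) ω • a i‖ ^ 2 ∂μ
      = ‖∑ i, a i‖ ^ 2 + ∑ i, ((p i)⁻¹ - 1) * ‖a i‖ ^ 2 := by
  classical
  have hint : ∀ i j, Integrable
      (fun ω => (S i).indicator (fun _ => (p i)⁻¹) ω * (S j).indicator (fun _ => (p j)⁻¹) ω) μ := by
    intro i j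
    simp_rw [← Set.inter_indicator_mul]
    refine (integrableOn_const ?_).integrable_indicator ((hSm i).inter (hSm j))
    exact measure_ne_top_of_subset Set.inter_subset_left (hS i ▸ ENNReal.ofReal_ne_top)
  rw [integral_norm_sq_sum_smul _ _ hint, ← sum_sum_ite_mul_inner]
  simp_rw [integral_indicator_mul_indicator hSm hindep hS hp]

theorem ProbabilityTheory.iIndepFun.integral_norm_sq_sum_ite_div_smul [Fintype ι]
    [IsZeroOrProbabilityMeasure μ] {X : ι → Ω → Bool} (hindep : iIndepFun X μ)
    (hX : ∀ i, Measurable (X i)) (hdist : ∀ i, μ {ω | X i ω = true} = ENNReal.ofReal (p i))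
    (hp : ∀ i, 0 < p i) (a : ι → E) :
    ∫ ω, ‖∑ i, ((if X i ω then 1 else 0) / p i) • a i‖ ^ 2 ∂μ
      = ‖∑ i, a i‖ ^ 2 + ∑ i, ((p i)⁻¹ - 1) * ‖a i‖ ^ 2 := by
  have hweight : ∀ i ω, (if X i ω then 1 else 0) / p i
      = {ω | X i ω = true}.indicator (fun _ => (p i)⁻¹) ω := by
    intro i ω
    by_cases h : X i ω <;> simp [h]
  have htrue : MeasurableSet {true} := measurableSet_singleton true
  simp_rw [hweight]
  exact integral_norm_sq_sum_indicator_smul (fun i => hX i htrue)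
    (fun i j hij => (indepFun_iff_indepSet_preimage (hX i) (hX j)).1 (hindep.indepFun hij)
      _ _ htrue htrue) hdist hp a

end Sampling

theorem es_independent_sampling_general {Ω : Type*} [MeasureSpace Ω]
    [IsProbabilityMeasure (ℙ : Measure Ω)] {d n : ℕ} (hn : 0 < n)
    (p : Fin n → ℝ) (hp : ∀ i, 0 < p i) (hp1 : ∀ i, p i ≤ 1)
    (f : Fin n → EuclideanSpace ℝ (Fin d) → ℝ)
    (L : Fin n → ℝ) (hL : ∀ i, 0 < L i)
    (hdiff : ∀ i x, DifferentiableAt ℝ (f i) x)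
    (hlip : ∀ i x y, ‖gradient (f i) x - gradient (f i) y‖ ≤ L i * ‖x - y‖)
    (finf : Fin n → ℝ) (hbound : ∀ i x, finf i ≤ f i x)
    (F : EuclideanSpace ℝ (Fin d) → ℝ) (hF : ∀ x, F x = (n : ℝ)⁻¹ * ∑ i, f i x)
    (fstar : ℝ)
    (X : Fin n → Ω → Bool)
    (hmeas : ∀ i, Measurable (X i))
    (hindep : iIndepFun X ℙ)
    (hdist : ∀ i, ℙ {ω | X i ω = true} = ENNReal.ofReal (p i))
    (v : Fin n → Ω → ℝ)
    (hv : ∀ i ω, v i ω = (if X i ω then 1 else 0) / p i)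
    (Δ A B C : ℝ)
    (hΔ : Δ = (n : ℝ)⁻¹ * ∑ i, (fstar - finf i))
    (hA : A = Finset.univ.sup'
      (Finset.univ_nonempty_iff.mpr ⟨⟨0, hn⟩⟩)
      (fun i : Fin n => (1 - p i) * L i / (p i * n)))
    (hB : B = 1)
    (hC : C = 2 * A * Δ) :
    ∀ x, ∫ ω, ‖(n : ℝ)⁻¹ • ∑ i, v i ω • gradient (f i) x‖ ^ 2 ≤
      2 * A * (F x - fstar) + B * ‖gradient F x‖ ^ 2 + C := by
  intro x
  have hsample : ∀ ω, (n : ℝ)⁻¹ • ∑ i, v i ω • gradient (f i) x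
      = ∑ i, ((if X i ω then 1 else 0) / p i) • ((n : ℝ)⁻¹ • gradient (f i) x) := fun ω => by
    simp_rw [Finset.smul_sum, hv, smul_comm (n : ℝ)⁻¹]
  have hgradF : gradient F x = ∑ i, (n : ℝ)⁻¹ • gradient (f i) x := by
    rw [← Finset.smul_sum, show F = fun y => (n : ℝ)⁻¹ * ∑ i, f i y from funext hF]
    exact ((HasGradientAt.sum _ fun i _ => (hdiff i x).hasGradientAt).const_mul _).gradient
  have hterm : ∀ i, ((p i)⁻¹ - 1) * ‖(n : ℝ)⁻¹ • gradient (f i) x‖ ^ 2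
      ≤ (n : ℝ)⁻¹ * (2 * A * (f i x - finf i)) := fun i => by
    have hAi : (1 - p i) * L i / (p i * n) ≤ A := by
      rw [hA]
      exact Finset.le_sup' (fun j => (1 - p j) * L j / (p j * n)) (Finset.mem_univ i)
    calc ((p i)⁻¹ - 1) * ‖(n : ℝ)⁻¹ • gradient (f i) x‖ ^ 2
        = (n : ℝ)⁻¹ ^ 2 * (((p i)⁻¹ - 1) * ‖gradient (f i) x‖ ^ 2) := by
          rw [norm_smul, norm_inv, Real.norm_natCast]; ring
      _ ≤ (n : ℝ)⁻¹ ^ 2 * (2 * ((1 - p i) * L i / p i) * (f i x - finf i)) := by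
          gcongr ?_ * ?_
          exact inv_sub_one_mul_norm_sq_gradient_le (hL i) (hdiff i) (hlip i) (hbound i)
            (hp i) (hp1 i) x
      _ = (n : ℝ)⁻¹ * (2 * ((1 - p i) * L i / (p i * n)) * (f i x - finf i)) := by
          field_simp
      _ ≤ (n : ℝ)⁻¹ * (2 * A * (f i x - finf i)) := by
          gcongr
          exact sub_nonneg.2 (hbound i x)
  have hsum : ∑ i, (n : ℝ)⁻¹ * (2 * A * (f i x - finf i)) = 2 * A * (F x - fstar) + C := by
    simp only [hC, hΔ, hF, ← Finset.mul_sum, Finset.sum_sub_distrib, Finset.sum_const,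
      Finset.card_univ, Fintype.card_fin, nsmul_eq_mul]
    field_simp [hn.ne']
    ring
  simp_rw [hsample]
  rw [hindep.integral_norm_sq_sum_ite_div_smul hmeas hdist hp, ← hgradF, hB, one_mul]
  linarith [Finset.sum_le_sum fun i (_ : i ∈ Finset.univ) => hterm i]

theorem es_independent_sampling {Ω : Type*} [MeasureSpace Ω]
    [IsProbabilityMeasure (ℙ : Measure Ω)] {d n : ℕ} (hn : 0 < n)
    (p : Fin n → ℝ) (hp : ∀ i, 0 < p i) (hp1 : ∀ i, p i ≤ 1)
    (f : Fin n → EuclideanSpace ℝ (Fin d) → ℝ)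
    (L : Fin n → ℝ) (hL : ∀ i, 0 < L i)
    (hdiff : ∀ i x, DifferentiableAt ℝ (f i) x)
    (hlip : ∀ i x y, ‖gradient (f i) x - gradient (f i) y‖ ≤ L i * ‖x - y‖)
    (finf : Fin n → ℝ) (hbound : ∀ i x, finf i ≤ f i x)
    (F : EuclideanSpace ℝ (Fin d) → ℝ) (hF : ∀ x, F x = (n : ℝ)⁻¹ * ∑ i, f i x)
    (fstar : ℝ) (hfstar : ∀ x, fstar ≤ F x)
    (X : Fin n → Ω → Bool)
    (hmeas : ∀ i, Measurable (X i))
    (hindep : iIndepFun X ℙ)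
    (hdist : ∀ i, ℙ {ω | X i ω = true} = ENNReal.ofReal (p i))
    (v : Fin n → Ω → ℝ)
    (hv : ∀ i ω, v i ω = (if X i ω then 1 else 0) / p i)
    (Δ A B C : ℝ)
    (hΔ : Δ = (n : ℝ)⁻¹ * ∑ i, (fstar - finf i))
    (hA : A = Finset.univ.sup'
      (Finset.univ_nonempty_iff.mpr ⟨⟨0, hn⟩⟩)
      (fun i : Fin n => (1 - p i) * L i / (p i * n)))
    (hB : B = 1)
    (hC : C = 2 * A * Δ) :
    ∀ x, ∫ ω, ‖(n : ℝ)⁻¹ • ∑ i, v i ω • gradient (f i) x‖ ^ 2 ≤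
      2 * A * (F x - fstar) + B * ‖gradient F x‖ ^ 2 + C :=
  es_independent_sampling_general hn p hp hp1 f L hL hdiff hlip finf hbound F hF fstar X hmeas
    hindep hdist v hv Δ A B C hΔ hA hB hC
end

section
/- Under τ-nice sampling, the ES condition holds with A = ((n−τ)/(τ(n−1)))·maxᵢ Lᵢ, B = n(τ−1)/(τ(n−1)), C = 2AΔ. -/
open MeasureTheory ProbabilityTheory Finset
open scoped ENNReal RealInnerProductSpace Gradient

/-! With `a i = ∇ fᵢ x`, the estimator is `τ⁻¹ ∑_{i ∈ S} a i`. Since a uniform τ-subset contains a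
given index with probability `τ / n` and a given pair of distinct indices with probability
`τ (τ - 1) / (n (n - 1))`, its second moment is exactly
`(n - τ) / (τ n (n - 1)) ∑ ‖a i‖² + (τ - 1) / (τ n (n - 1)) ‖∑ a i‖²`.
As `∑ a i = n ∇f x`, the second term is `B ‖∇f x‖²`. For the first, one gradient step of length
`1 / Lᵢ` from `x` shows `‖∇ fᵢ x‖² ≤ 2 Lᵢ (fᵢ x - fᵢ^inf)`, and summing these bounds gives
`∑ ‖a i‖² ≤ 2 n (maxᵢ Lᵢ) (f x - f⋆ + Δ)`. -/

section Combinatorics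

variable {ι : Type*} [Fintype ι] [DecidableEq ι]

theorem card_powersetCard_filter_superset_mul_choose (s : Finset ι) (τ : ℕ) :
    #{A ∈ powersetCard τ univ | s ⊆ A} * (Fintype.card ι).choose #s
      = (Fintype.card ι).choose τ * τ.choose #s := by
  by_cases hs : #s ≤ τ
  · rw [card_filter_powersetCard_subset s univ τ (subset_univ s) hs, card_univ,
      Nat.choose_mul hs, mul_comm]
  · have hempty : {A ∈ powersetCard τ (univ : Finset ι) | s ⊆ A} = ∅ := by
      refine filter_eq_empty_iff.mpr fun A hA hsA => hs ?_
      rw [← (mem_powersetCard.mp hA).2]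
      exact card_le_card hsA
    rw [hempty, Nat.choose_eq_zero_of_lt (not_le.mp hs)]
    simp

theorem card_powersetCard_filter_mem_mem_mul (τ : ℕ) (i j : ι) :
    (#{A ∈ powersetCard τ univ | i ∈ A ∧ j ∈ A} : ℝ)
        * ((Fintype.card ι : ℝ) * (Fintype.card ι - 1))
      = (Fintype.card ι).choose τ
        * ((τ : ℝ) * (τ - 1) + if i = j then (τ : ℝ) * (Fintype.card ι - τ) else 0) := by
  by_cases hij : i = j
  · subst hij
    have h := card_powersetCard_filter_superset_mul_choose {i} τ
    simp only [card_singleton, Nat.choose_one_right, singleton_subset_iff] at h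
    have h' : (#{A ∈ powersetCard τ univ | i ∈ A} : ℝ) * Fintype.card ι
        = (Fintype.card ι).choose τ * τ := by exact_mod_cast h
    simp only [and_self, if_true]
    linear_combination ((Fintype.card ι : ℝ) - 1) * h'
  · have h := card_powersetCard_filter_superset_mul_choose {i, j} τ
    simp only [card_pair hij, insert_subset_iff, singleton_subset_iff] at h
    have h' : (#{A ∈ powersetCard τ univ | i ∈ A ∧ j ∈ A} : ℝ) * (Fintype.card ι).choose 2
        = (Fintype.card ι).choose τ * τ.choose 2 := by exact_mod_cast h
    rw [Nat.cast_choose_two, Nat.cast_choose_two] at h'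
    simp only [hij, if_false]
    linear_combination 2 * h'

variable {E : Type*} [NormedAddCommGroup E] [InnerProductSpace ℝ E]

theorem sum_norm_sq_sum_eq_sum_card_mul_inner (𝒜 : Finset (Finset ι)) (a : ι → E) :
    ∑ A ∈ 𝒜, ‖∑ i ∈ A, a i‖ ^ 2 = ∑ i, ∑ j, (#{A ∈ 𝒜 | i ∈ A ∧ j ∈ A} : ℝ) * ⟪a i, a j⟫ := by
  have hA : ∀ A : Finset ι, ‖∑ i ∈ A, a i‖ ^ 2
      = ∑ i, ∑ j, if i ∈ A ∧ j ∈ A then ⟪a i, a j⟫ else 0 := by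
    intro A
    rw [← real_inner_self_eq_norm_sq, sum_inner]
    simp_rw [inner_sum, ← Fintype.sum_extend_by_zero A, ite_and, sum_ite_irrel, sum_const_zero]
  simp_rw [hA]
  rw [sum_comm]
  refine sum_congr rfl fun i _ => ?_
  rw [sum_comm]
  refine sum_congr rfl fun j _ => ?_
  rw [← sum_filter, sum_const, nsmul_eq_mul]

theorem sum_powersetCard_norm_sq_sum_mul (τ : ℕ) (a : ι → E) :
    (∑ A ∈ powersetCard τ univ, ‖∑ i ∈ A, a i‖ ^ 2)
        * ((Fintype.card ι : ℝ) * (Fintype.card ι - 1))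
      = (Fintype.card ι).choose τ * ((τ : ℝ) * (Fintype.card ι - τ) * ∑ i, ‖a i‖ ^ 2
          + (τ : ℝ) * (τ - 1) * ‖∑ i, a i‖ ^ 2) := by
  have hterm : ∀ i j, (#{A ∈ powersetCard τ univ | i ∈ A ∧ j ∈ A} : ℝ) * ⟪a i, a j⟫
        * ((Fintype.card ι : ℝ) * (Fintype.card ι - 1))
      = (Fintype.card ι).choose τ * ((τ : ℝ) * (τ - 1) * ⟪a i, a j⟫
        + if i = j then (τ : ℝ) * (Fintype.card ι - τ) * ‖a i‖ ^ 2 else 0) := by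
    intro i j
    rw [mul_right_comm, card_powersetCard_filter_mem_mem_mul]
    split_ifs with h
    · subst h; rw [real_inner_self_eq_norm_sq]; ring
    · ring
  simp_rw [sum_norm_sq_sum_eq_sum_card_mul_inner, sum_mul, hterm, ← mul_sum, sum_add_distrib,
    sum_ite_eq, if_pos (mem_univ _), ← mul_sum, ← inner_sum, ← sum_inner,
    real_inner_self_eq_norm_sq]
  ring

end Combinatorics

section Smooth

variable {E : Type*} [NormedAddCommGroup E] [InnerProductSpace ℝ E] [CompleteSpace E]

theorem le_add_inner_gradient_add_of_lipschitz_gradient {f : E → ℝ} {L : ℝ} (hf : ∀ x, DifferentiableAt ℝ f x)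
    (hL : ∀ x y, ‖∇ f x - ∇ f y‖ ≤ L * ‖x - y‖) (x y : E) :
    f y ≤ f x + ⟪∇ f x, y - x⟫ + L / 2 * ‖y - x‖ ^ 2 := by
  set v := y - x
  have hline : ∀ t : ℝ, HasDerivAt (fun t : ℝ => f (x + t • v)) ⟪∇ f (x + t • v), v⟫ t := by
    intro t
    have hγ : HasDerivAt (fun t : ℝ => x + t • v) v t := by
      simpa using ((hasDerivAt_id t).smul_const v).const_add x
    simpa [Function.comp_def, InnerProductSpace.toDual_apply_apply] using
      (hf (x + t • v)).hasGradientAt.hasFDerivAt.comp_hasDerivAt t hγ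
  have hquad : ∀ t : ℝ, HasDerivAt (fun t : ℝ => f x + t * ⟪∇ f x, v⟫ + L / 2 * t ^ 2 * ‖v‖ ^ 2)
      (⟪∇ f x, v⟫ + L * t * ‖v‖ ^ 2) t := by
    intro t
    have hsq : HasDerivAt (fun t : ℝ => t ^ 2) (2 * t) t := by simpa using hasDerivAt_pow 2 t
    exact ((((hasDerivAt_id' t).mul_const ⟪∇ f x, v⟫).const_add (f x)).add
      ((hsq.const_mul (L / 2)).mul_const (‖v‖ ^ 2))).congr_deriv (by ring)
  have hslope : ∀ t ∈ Set.Ico (0 : ℝ) 1,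
      ⟪∇ f (x + t • v), v⟫ ≤ ⟪∇ f x, v⟫ + L * t * ‖v‖ ^ 2 := by
    rintro t ⟨ht, -⟩
    have hCS := real_inner_le_norm (∇ f (x + t • v) - ∇ f x) v
    have hlip := hL (x + t • v) x
    rw [add_sub_cancel_left, norm_smul, Real.norm_of_nonneg ht] at hlip
    rw [inner_sub_left] at hCS
    nlinarith [mul_le_mul_of_nonneg_right hlip (norm_nonneg v)]
  have key := image_le_of_deriv_right_le_deriv_boundary
    (fun t _ => (hline t).continuousAt.continuousWithinAt)
    (fun t _ => (hline t).hasDerivWithinAt) (by simp)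
    (fun t _ => (hquad t).continuousAt.continuousWithinAt)
    (fun t _ => (hquad t).hasDerivWithinAt) hslope (Set.right_mem_Icc.mpr zero_le_one)
  simpa [v] using key

theorem norm_gradient_sq_le_of_lipschitz_gradient {f : E → ℝ} {L : ℝ} (hf : ∀ x, DifferentiableAt ℝ f x)
    (hL : ∀ x y, ‖∇ f x - ∇ f y‖ ≤ L * ‖x - y‖) (hL₀ : 0 < L) {m : ℝ} (hm : ∀ x, m ≤ f x)
    (x : E) : ‖∇ f x‖ ^ 2 ≤ 2 * L * (f x - m) := by
  -- One gradient step of length `1 / L` decreases `f` by at least `‖∇ f x‖ ^ 2 / (2 L)`.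
  have hstep := le_add_inner_gradient_add_of_lipschitz_gradient hf hL x (x - L⁻¹ • ∇ f x)
  rw [sub_sub_cancel_left, inner_neg_right, real_inner_smul_right, real_inner_self_eq_norm_sq,
    norm_neg, norm_smul, Real.norm_of_nonneg (inv_nonneg.mpr hL₀.le)] at hstep
  have hnorm : L / 2 * (L⁻¹ * ‖∇ f x‖) ^ 2 = L⁻¹ / 2 * ‖∇ f x‖ ^ 2 := by field_simp
  have hdecrease : L⁻¹ * ‖∇ f x‖ ^ 2 ≤ 2 * (f x - m) := by
    linarith [hm (x - L⁻¹ • ∇ f x)]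
  calc ‖∇ f x‖ ^ 2 = L * (L⁻¹ * ‖∇ f x‖ ^ 2) := by field_simp
    _ ≤ L * (2 * (f x - m)) := by gcongr
    _ = 2 * L * (f x - m) := by ring

theorem gradient_const_mul_sum {ι : Type*} (s : Finset ι) {f : ι → E → ℝ} {x : E}
    (hf : ∀ i ∈ s, DifferentiableAt ℝ (f i) x) (c : ℝ) :
    ∇ (fun y => c * ∑ i ∈ s, f i y) x = c • ∑ i ∈ s, ∇ (f i) x := by
  have hderiv := (HasFDerivAt.fun_sum fun i hi => (hf i hi).hasFDerivAt).const_mul c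
  rw [(hasFDerivAt_iff_hasGradientAt.mp hderiv).gradient, map_smul, map_sum]
  rfl

theorem sum_norm_gradient_sq_le {ι : Type*} (s : Finset ι) {f : ι → E → ℝ} {L m : ι → ℝ}
    {Lmax : ℝ} (hf : ∀ i ∈ s, ∀ x, DifferentiableAt ℝ (f i) x)
    (hL : ∀ i ∈ s, ∀ x y, ‖∇ (f i) x - ∇ (f i) y‖ ≤ L i * ‖x - y‖) (hL₀ : ∀ i ∈ s, 0 < L i)
    (hLmax : ∀ i ∈ s, L i ≤ Lmax) (hm : ∀ i ∈ s, ∀ x, m i ≤ f i x) (x : E) :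
    ∑ i ∈ s, ‖∇ (f i) x‖ ^ 2 ≤ 2 * Lmax * ∑ i ∈ s, (f i x - m i) := by
  rw [mul_sum]
  refine sum_le_sum fun i hi => ?_
  calc ‖∇ (f i) x‖ ^ 2 ≤ 2 * L i * (f i x - m i) :=
        norm_gradient_sq_le_of_lipschitz_gradient (hf i hi) (hL i hi) (hL₀ i hi) (hm i hi) x
    _ ≤ 2 * Lmax * (f i x - m i) := by
        gcongr
        · linarith [hm i hi x]
        · exact hLmax i hi

end Smooth

section Sampling

variable {Ω : Type*} [MeasurableSpace Ω] {μ : Measure Ω} [IsFiniteMeasure μ]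

theorem integral_comp_eq_sum_measureReal {α G : Type*} [Fintype α] [NormedAddCommGroup G]
    [NormedSpace ℝ G] [CompleteSpace G] {S : Ω → α} (hS : ∀ a, MeasurableSet {ω | S ω = a})
    (φ : α → G) : ∫ ω, φ (S ω) ∂μ = ∑ a, μ.real {ω | S ω = a} • φ a := by
  have hfiber : ∀ ω, φ (S ω) = ∑ a, Set.indicator {ω | S ω = a} (fun _ => φ a) ω := by
    intro ω
    rw [sum_eq_single (S ω)]
    · exact (Set.indicator_of_mem rfl _).symm
    · exact fun a _ ha => Set.indicator_of_notMem (Ne.symm ha) _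
    · exact fun h => absurd (mem_univ _) h
  simp_rw [hfiber]
  rw [integral_finsetSum _ fun a _ => (integrable_const (φ a)).indicator (hS a)]
  exact sum_congr rfl fun a _ => integral_indicator_const (φ a) (hS a)

theorem inv_smul_sum_rescaled_ite_smul {ι E : Type*} [Fintype ι] [DecidableEq ι]
    [AddCommGroup E] [Module ℝ E] {n : ℝ} (hn : n ≠ 0) (τ : ℝ) (s : Finset ι) (a : ι → E) :
    n⁻¹ • ∑ i, (n / τ * if i ∈ s then 1 else 0) • a i = τ⁻¹ • ∑ i ∈ s, a i := by
  simp_rw [mul_smul, ite_smul, one_smul, zero_smul, smul_ite, smul_zero,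
    Fintype.sum_extend_by_zero, ← smul_sum, smul_smul]
  congr 1
  field_simp

theorem integral_norm_sq_inv_smul_sum_of_uniform_powersetCard {ι E : Type*} [Fintype ι]
    [DecidableEq ι] [NormedAddCommGroup E] [InnerProductSpace ℝ E] [CompleteSpace E] {τ : ℕ}
    (hn : 2 ≤ Fintype.card ι) (hτn : τ ≤ Fintype.card ι) {S : Ω → Finset ι}
    (hS : ∀ A, MeasurableSet {ω | S ω = A})
    (hdist : ∀ A, μ {ω | S ω = A}
      = if #A = τ then ((Fintype.card ι).choose τ : ℝ≥0∞)⁻¹ else 0) (a : ι → E) :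
    ∫ ω, ‖(τ : ℝ)⁻¹ • ∑ i ∈ S ω, a i‖ ^ 2 ∂μ
      = (Fintype.card ι - τ) / (τ * Fintype.card ι * (Fintype.card ι - 1)) * ∑ i, ‖a i‖ ^ 2
        + (τ - 1) / (τ * Fintype.card ι * (Fintype.card ι - 1)) * ‖∑ i, a i‖ ^ 2 := by
  have hprob : ∀ A, μ.real {ω | S ω = A}
      = if #A = τ then ((Fintype.card ι).choose τ : ℝ)⁻¹ else 0 := by
    intro A
    rw [measureReal_def, hdist]
    split_ifs <;> simp
  have hmean : ∫ ω, ‖(τ : ℝ)⁻¹ • ∑ i ∈ S ω, a i‖ ^ 2 ∂μ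
      = ((Fintype.card ι).choose τ : ℝ)⁻¹ * (τ : ℝ)⁻¹ ^ 2
        * ∑ A ∈ powersetCard τ univ, ‖∑ i ∈ A, a i‖ ^ 2 := by
    rw [integral_comp_eq_sum_measureReal hS (fun A => ‖(τ : ℝ)⁻¹ • ∑ i ∈ A, a i‖ ^ 2),
      powersetCard_eq_filter, powerset_univ, sum_filter, mul_sum]
    refine sum_congr rfl fun A _ => ?_
    rw [hprob, norm_smul, mul_pow, Real.norm_of_nonneg (by positivity)]
    split_ifs <;> ring
  have hn₀ : (2 : ℝ) ≤ Fintype.card ι := by exact_mod_cast hn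
  have hC : ((Fintype.card ι).choose τ : ℝ) ≠ 0 := by
    exact_mod_cast (Nat.choose_pos hτn).ne'
  have hsum := sum_powersetCard_norm_sq_sum_mul τ a
  rw [← eq_div_iff (by nlinarith)] at hsum
  rw [hmean, hsum]
  field_simp

end Sampling

theorem es_tau_nice_sampling {Ω : Type*} [MeasureSpace Ω]
    [IsProbabilityMeasure (ℙ : Measure Ω)] {d n : ℕ} (hn : 2 ≤ n)
    (τ : ℕ) (hτn : τ ≤ n)
    (f : Fin n → EuclideanSpace ℝ (Fin d) → ℝ)
    (L : Fin n → ℝ) (hL : ∀ i, 0 < L i)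
    (hdiff : ∀ i x, DifferentiableAt ℝ (f i) x)
    (hlip : ∀ i x y, ‖gradient (f i) x - gradient (f i) y‖ ≤ L i * ‖x - y‖)
    (finf : Fin n → ℝ) (hbound : ∀ i x, finf i ≤ f i x)
    (F : EuclideanSpace ℝ (Fin d) → ℝ) (hF : ∀ x, F x = (n : ℝ)⁻¹ * ∑ i, f i x)
    (fstar : ℝ)
    (S : Ω → Finset (Fin n))
    (hmeas : ∀ A : Finset (Fin n), MeasurableSet {ω | S ω = A})
    (hdist : ∀ A : Finset (Fin n),
      ℙ {ω | S ω = A} = if A.card = τ then (n.choose τ : ℝ≥0∞)⁻¹ else 0)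
    (v : Fin n → Ω → ℝ)
    (hv : ∀ i ω, v i ω = (n / τ : ℝ) * (if i ∈ S ω then 1 else 0))
    (Δ A B C : ℝ)
    (hΔ : Δ = (n : ℝ)⁻¹ * ∑ i, (fstar - finf i))
    (hA : A = ((n - τ : ℝ) / (τ * (n - 1))) * Finset.univ.sup'
      (Finset.univ_nonempty_iff.mpr ⟨⟨0, by omega⟩⟩)
      (fun i : Fin n => L i))
    (hB : B = (n : ℝ) * (τ - 1) / (τ * (n - 1)))
    (hC : C = 2 * A * Δ) :
    ∀ x, ∫ ω, ‖(n : ℝ)⁻¹ • ∑ i, v i ω • gradient (f i) x‖ ^ 2 ≤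
      2 * A * (F x - fstar) + B * ‖gradient F x‖ ^ 2 + C := by
  intro x
  obtain ⟨Lmax, hALmax, hLmax⟩ :
      ∃ Lmax : ℝ, A = ((n - τ : ℝ) / (τ * (n - 1))) * Lmax ∧ ∀ i, L i ≤ Lmax :=
    ⟨_, hA, fun i => le_sup' _ (mem_univ i)⟩
  have hn₀ : (2 : ℝ) ≤ n := by exact_mod_cast hn
  have hgradF : ∑ i, gradient (f i) x = (n : ℝ) • gradient F x := by
    rw [show F = fun y => (n : ℝ)⁻¹ * ∑ i, f i y from funext hF,
      gradient_const_mul_sum _ (fun i _ => hdiff i x), smul_smul, mul_inv_cancel₀ (by positivity),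
      one_smul]
  have hgap : ∑ i, (f i x - finf i) = n * (F x - fstar + Δ) := by
    rw [hF, hΔ, sum_sub_distrib, sum_sub_distrib, sum_const, card_univ, Fintype.card_fin,
      nsmul_eq_mul]
    field_simp
    ring
  have hsq := sum_norm_gradient_sq_le univ (fun i _ => hdiff i) (fun i _ => hlip i)
    (fun i _ => hL i) (fun i _ => hLmax i) (fun i _ => hbound i) x
  have hmoment := integral_norm_sq_inv_smul_sum_of_uniform_powersetCard (μ := ℙ) (ι := Fin n)
    (by simpa using hn) (by simpa using hτn) hmeas (by simpa using hdist)
    (fun i => gradient (f i) x)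
  rw [Fintype.card_fin] at hmoment
  rw [hgap] at hsq
  simp_rw [hv, inv_smul_sum_rescaled_ite_smul (by positivity : (n : ℝ) ≠ 0), hmoment, hgradF]
  calc _ ≤ (n - τ) / (τ * n * (n - 1)) * (2 * Lmax * (n * (F x - fstar + Δ)))
        + (τ - 1) / (τ * n * (n - 1)) * ‖(n : ℝ) • gradient F x‖ ^ 2 := by
        gcongr
        have : (0 : ℝ) ≤ n - 1 := by linarith
        exact div_nonneg (sub_nonneg.mpr (by exact_mod_cast hτn)) (by positivity)
    _ = 2 * A * (F x - fstar) + B * ‖gradient F x‖ ^ 2 + C := by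
        rw [hC, hALmax, hB, norm_smul, Real.norm_natCast]
        field_simp
        ring
end
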